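/- arXiv:2211.07559 — 2 statements merged into one kernel-verified Lean document; each statement's English description precedes it below -/
import Mathlib

section
/- In the Lusternik–Schnirelmann setting, if d_j = d_{j+1} for some j, then the critical set Cr(d_j) is infinite. -/
/-- The minimax values of Lusternik–Schnirelmann theory:
`d j = inf { sup σ(S) : S ⊆ M, I(S) ≥ j }`. -/
noncomputable def lsMinimax {M : Type*} [TopologicalSpace M]
    (I : Set M → ℕ) (σ : M → ℝ) (j : ℕ) : ℝ :=
  sInf {r : ℝ | ∃ S : Set M, j ≤ I S ∧ r = sSup (σ '' S)}

/-- The critical set at level `d`: fixed points of the flow on which `σ` takes the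
value `d`. -/
def lsCrit {M : Type*} [TopologicalSpace M] (φ : ℝ → M → M) (σ : M → ℝ) (d : ℝ) :
    Set M :=
  {x : M | σ x = d ∧ ∀ t : ℝ, φ t x = x}

/-!
Suppose `Cr(d)` is finite, where `d = d_j = d_{j+1}`. Then it has index at most one, and so
does some open neighbourhood `U` of it. The deformation property gives `ε > 0` such that the
time-one map pushes everything outside `U` below level `d + ε` down to level `d - ε`. Take `S`
of index `≥ j + 1` with `sup σ(S) < d + ε`; by subadditivity `S \ U` still has index `≥ j`, and
so does its image under the time-one map, on which `σ ≤ d - ε`. Hence `d_j ≤ d - ε < d_j`.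
-/

section Index

variable {M : Type*} {I : Set M → ℕ}

theorem index_le_index_diff_add (hmono : ∀ S T : Set M, S ⊆ T → I S ≤ I T)
    (hsub : ∀ S T : Set M, I (S ∪ T) ≤ I S + I T) (S U : Set M) :
    I S ≤ I (S \ U) + I U :=
  (hmono _ _ (by rw [Set.sdiff_union_self]; exact Set.subset_union_left)).trans (hsub _ _)

theorem index_le_one_of_finite [Nonempty M] (hmono : ∀ S T : Set M, S ⊆ T → I S ≤ I T)
    (hfin : ∀ S : Set M, S.Finite → S.Nonempty → I S = 1) {S : Set M} (hS : S.Finite) :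
    I S ≤ 1 := by
  rcases S.eq_empty_or_nonempty with rfl | hne
  · obtain ⟨x⟩ := ‹Nonempty M›
    exact (hmono _ _ (Set.empty_subset {x})).trans
      (hfin _ (Set.finite_singleton x) (Set.singleton_nonempty x)).le
  · exact (hfin S hS hne).le

end Index

/-- The `0` accounts for `sSup` of an empty or unbounded set of reals, which is `0`. -/
theorem min_le_sSup_image {M : Type*} {σ : M → ℝ} {b : ℝ} (hb : ∀ x, b ≤ σ x) (S : Set M) :
    min b 0 ≤ sSup (σ '' S) := by
  rcases S.eq_empty_or_nonempty with rfl | ⟨x, hx⟩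
  · simp
  by_cases hS : BddAbove (σ '' S)
  · exact (min_le_left b 0).trans ((hb x).trans (le_csSup hS ⟨x, hx, rfl⟩))
  · rw [Real.sSup_of_not_bddAbove hS]
    exact min_le_right b 0

section Minimax

variable {M : Type*} [TopologicalSpace M] {I : Set M → ℕ} {σ : M → ℝ}

theorem lsMinimax_le_sSup_image (hσ : BddBelow (Set.range σ)) {j : ℕ} {S : Set M}
    (hS : j ≤ I S) : lsMinimax I σ j ≤ sSup (σ '' S) := by
  obtain ⟨b, hb⟩ := hσ
  refine csInf_le ⟨min b 0, ?_⟩ ⟨S, hS, rfl⟩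
  rintro _ ⟨T, -, rfl⟩
  exact min_le_sSup_image (fun x => hb ⟨x, rfl⟩) T

theorem exists_sSup_image_lt_of_lsMinimax_lt {j : ℕ} (hj : j ≤ I Set.univ) {c : ℝ}
    (hc : lsMinimax I σ j < c) : ∃ S, j ≤ I S ∧ sSup (σ '' S) < c := by
  have hne : {r : ℝ | ∃ S : Set M, j ≤ I S ∧ r = sSup (σ '' S)}.Nonempty :=
    ⟨_, Set.univ, hj, rfl⟩
  obtain ⟨_, ⟨S, hS, rfl⟩, hlt⟩ := exists_lt_of_csInf_lt hne hc
  exact ⟨S, hS, hlt⟩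

theorem lsMinimax_le_sub_of_deformation
    (hσa : BddAbove (Set.range σ)) (hσb : BddBelow (Set.range σ))
    (hmono : ∀ S T : Set M, S ⊆ T → I S ≤ I T)
    (hsub : ∀ S T : Set M, I (S ∪ T) ≤ I S + I T)
    {f : M → M} (hf : ∀ S, I S ≤ I (f '' S)) {U : Set M} {k j : ℕ} (hU : I U ≤ k)
    (hj : 1 ≤ j) (hjk : j + k ≤ I Set.univ) {d ε : ℝ}
    (hdef : ∀ x, σ x ≤ d + ε → x ∉ U → σ (f x) ≤ d - ε)
    (hlt : lsMinimax I σ (j + k) < d + ε) :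
    lsMinimax I σ j ≤ d - ε := by
  obtain ⟨S, hSI, hSσ⟩ := exists_sSup_image_lt_of_lsMinimax_lt hjk hlt
  have hSU : (S \ U).Nonempty := Set.sdiff_nonempty.mpr fun h => by
    have := hmono _ _ h
    omega
  have hindex : j ≤ I (f '' (S \ U)) := by
    have := index_le_index_diff_add hmono hsub S U
    have := hf (S \ U)
    omega
  calc lsMinimax I σ j ≤ sSup (σ '' (f '' (S \ U))) := lsMinimax_le_sSup_image hσb hindex
    _ ≤ d - ε := by
      refine csSup_le ((hSU.image f).image σ) ?_
      rintro _ ⟨_, ⟨x, ⟨hxS, hxU⟩, rfl⟩, rfl⟩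
      have hx : σ x ≤ sSup (σ '' S) :=
        le_csSup (hσa.mono (Set.image_subset_range σ S)) ⟨x, hxS, rfl⟩
      exact hdef x (by linarith) hxU

end Minimax

theorem ls_crit_infinite_of_eq_general
    (M : Type*) [TopologicalSpace M] [CompactSpace M] [Nonempty M]
    (φ : ℝ → M → M)
    (I : Set M → ℕ)
    (hmono : ∀ S T : Set M, S ⊆ T → I S ≤ I T)
    (hnbhd : ∀ S : Set M, ∃ U : Set M, IsOpen U ∧ S ⊆ U ∧ I U = I S)
    (hsub : ∀ S T : Set M, I (S ∪ T) ≤ I S + I T)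
    (hflow : ∀ (t : ℝ) (S : Set M), I (φ t '' S) = I S)
    (hfin : ∀ S : Set M, S.Finite → S.Nonempty → I S = 1)
    (σ : M → ℝ) (hσ : Continuous σ)
    (hdefm : ∀ (d : ℝ) (U : Set M), IsOpen U → lsCrit φ σ d ⊆ U →
      ∃ ε > (0 : ℝ), ∀ x : M, σ x ≤ d + ε → x ∉ U → σ (φ 1 x) ≤ d - ε)
    (j : ℕ) (hj : 1 ≤ j) (hj' : j + 1 ≤ I Set.univ)
    (heq : lsMinimax I σ j = lsMinimax I σ (j + 1)) :
    (lsCrit φ σ (lsMinimax I σ j)).Infinite := by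
  intro hfinite
  set d := lsMinimax I σ j
  obtain ⟨U, hUopen, hCrU, hUI⟩ := hnbhd (lsCrit φ σ d)
  have hU : I U ≤ 1 := hUI ▸ index_le_one_of_finite hmono hfin hfinite
  obtain ⟨ε, hε, hdef⟩ := hdefm d U hUopen hCrU
  have hle : d ≤ d - ε :=
    lsMinimax_le_sub_of_deformation (isCompact_range hσ).bddAbove (isCompact_range hσ).bddBelow
      hmono hsub (fun S => (hflow 1 S).ge) hU hj hj' hdef (by linarith)
  linarith

/-- In the Lusternik–Schnirelmann setting, if `d_j = d_{j+1}` for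
some `j`, then the critical set `Cr(d_j)` is infinite. -/
theorem ls_crit_infinite_of_eq
    (M : Type*) [TopologicalSpace M] [CompactSpace M] [Nonempty M]
    (φ : ℝ → M → M)
    (hφcont : Continuous fun p : ℝ × M => φ p.1 p.2)
    (hφzero : ∀ x, φ 0 x = x)
    (hφadd : ∀ s t x, φ (s + t) x = φ s (φ t x))
    (I : Set M → ℕ)
    (hmono : ∀ S T : Set M, S ⊆ T → I S ≤ I T)
    (hnbhd : ∀ S : Set M, ∃ U : Set M, IsOpen U ∧ S ⊆ U ∧ I U = I S)
    (hsub : ∀ S T : Set M, I (S ∪ T) ≤ I S + I T)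
    (hflow : ∀ (t : ℝ) (S : Set M), I (φ t '' S) = I S)
    (hfin : ∀ S : Set M, S.Finite → S.Nonempty → I S = 1)
    (σ : M → ℝ) (hσ : Continuous σ)
    (hdec : ∀ x : M, (∃ t, φ t x ≠ x) → StrictAnti fun t : ℝ => σ (φ t x))
    (hdefm : ∀ (d : ℝ) (U : Set M), IsOpen U → lsCrit φ σ d ⊆ U →
      ∃ ε > (0 : ℝ), ∀ x : M, σ x ≤ d + ε → x ∉ U → σ (φ 1 x) ≤ d - ε)
    (j : ℕ) (hj : 1 ≤ j) (hj' : j + 1 ≤ I Set.univ)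
    (heq : lsMinimax I σ j = lsMinimax I σ (j + 1)) :
    (lsCrit φ σ (lsMinimax I σ j)).Infinite :=
  ls_crit_infinite_of_eq_general M φ I hmono hnbhd hsub hflow hfin σ hσ hdefm j hj hj' heq
end

section
/- Let M be a compact topological space, σ : M → ℝ continuous, φ a continuous flow on M with σ strictly decreasing along non-fixed orbits, d ∈ ℝ, Cr(d) the set of fixed points at level d, and U any open neighborhood of Cr(d). Then there exists ε > 0 such that every x with σ(x) ≤ d + ε and x ∉ U satisfies σ(φ(1, x)) ≤ d − ε. -/
/-!
Outside `U` the continuous function `x ↦ max (σ x - d) (d - σ (φ 1 x))` is positive: if both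
terms were `≤ 0`, then `σ (φ 1 x) ≥ σ x`, so `x` could not move and would be a fixed point at
level `d`, i.e. a point of `Cr(d) ⊆ U`. On the compact set `Uᶜ` it is therefore bounded below by
some `δ > 0`, and `ε = δ / 2` works.
-/

theorem mem_fixed_level_of_le_of_le {M : Type*} {φ : ℝ → M → M} (hφzero : ∀ x, φ 0 x = x)
    {σ : M → ℝ} (hdec : ∀ x : M, (∃ t, φ t x ≠ x) → StrictAnti fun t : ℝ => σ (φ t x))
    {d t : ℝ} (ht : 0 < t) {x : M} (hx : σ x ≤ d) (hφx : d ≤ σ (φ t x)) :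
    σ x = d ∧ ∀ s : ℝ, φ s x = x := by
  have hfixed : ∀ s : ℝ, φ s x = x := by
    by_contra! hmove
    have hlt : σ (φ t x) < σ (φ 0 x) := hdec x hmove ht
    rw [hφzero] at hlt
    linarith
  refine ⟨le_antisymm hx ?_, hfixed⟩
  rwa [hfixed t] at hφx

theorem deformation_lemma_general
    (M : Type*) [TopologicalSpace M] [CompactSpace M]
    (φ : ℝ → M → M)
    (hφcont : Continuous fun p : ℝ × M => φ p.1 p.2)
    (hφzero : ∀ x, φ 0 x = x)
    (σ : M → ℝ) (hσ : Continuous σ)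
    (hdec : ∀ x : M, (∃ t, φ t x ≠ x) → StrictAnti fun t : ℝ => σ (φ t x))
    (d : ℝ) (U : Set M) (hU : IsOpen U)
    (hCr : {x : M | σ x = d ∧ ∀ t : ℝ, φ t x = x} ⊆ U) :
    ∃ ε > (0 : ℝ), ∀ x : M, σ x ≤ d + ε → x ∉ U → σ (φ 1 x) ≤ d - ε := by
  set gap : M → ℝ := fun x => max (σ x - d) (d - σ (φ 1 x))
  have hgap_cont : Continuous gap :=
    ((hσ.sub continuous_const).max
      (continuous_const.sub (hσ.comp (hφcont.comp (continuous_const.prodMk continuous_id)))))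
  have hgap_pos : ∀ x ∈ Uᶜ, 0 < gap x := by
    intro x hxU
    by_contra! hle
    have hσx : σ x ≤ d := by linarith [le_max_left (σ x - d) (d - σ (φ 1 x))]
    have hσφx : d ≤ σ (φ 1 x) := by linarith [le_max_right (σ x - d) (d - σ (φ 1 x))]
    exact hxU (hCr (mem_fixed_level_of_le_of_le hφzero hdec one_pos hσx hσφx))
  obtain ⟨δ, hδ, hδ_le⟩ :=
    hU.isClosed_compl.isCompact.exists_forall_le' hgap_cont.continuousOn hgap_pos
  refine ⟨δ / 2, half_pos hδ, fun x hσx hxU => ?_⟩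
  have hgap_x : δ ≤ max (σ x - d) (d - σ (φ 1 x)) := hδ_le x hxU
  rcases le_max_iff.mp hgap_x with hleft | hright <;> linarith

/-- deformation lemma. Let `M` be a compact topological space,
`σ : M → ℝ` continuous, `φ` a continuous flow on `M` with `σ` strictly decreasing
along non-fixed orbits, `d ∈ ℝ`, `Cr(d)` the set of fixed points at level `d`, and `U`
any open neighbourhood of `Cr(d)`. Then there exists `ε > 0` such that every `x` with
`σ(x) ≤ d + ε` and `x ∉ U` satisfies `σ(φ(1, x)) ≤ d − ε`. -/
theorem deformation_lemma
    (M : Type*) [TopologicalSpace M] [CompactSpace M]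
    (φ : ℝ → M → M)
    (hφcont : Continuous fun p : ℝ × M => φ p.1 p.2)
    (hφzero : ∀ x, φ 0 x = x)
    (hφadd : ∀ s t x, φ (s + t) x = φ s (φ t x))
    (σ : M → ℝ) (hσ : Continuous σ)
    (hdec : ∀ x : M, (∃ t, φ t x ≠ x) → StrictAnti fun t : ℝ => σ (φ t x))
    (d : ℝ) (U : Set M) (hU : IsOpen U)
    (hCr : {x : M | σ x = d ∧ ∀ t : ℝ, φ t x = x} ⊆ U) :
    ∃ ε > (0 : ℝ), ∀ x : M, σ x ≤ d + ε → x ∉ U → σ (φ 1 x) ≤ d - ε :=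
  deformation_lemma_general M φ hφcont hφzero σ hσ hdec d U hU hCr
end
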